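/- arXiv:2201.06972 — 2 statements merged into one kernel-verified Lean document; each statement's English description precedes it below -/
import Mathlib

section
/- For every positive integer n, the number of restricted growth strings of length n equals the number of partitions of an n-element set (equivalently, the number of equivalence relations on Fin n). -/
/-- A restricted growth string of length `n`: `b 0 = 0` and
`b (i+1) ≤ 1 + max (b 0, …, b i)`. -/
def IsRGS (n : ℕ) (b : Fin n → ℕ) : Prop :=
  (∀ i : Fin n, (i : ℕ) = 0 → b i = 0) ∧
  (∀ (i : Fin n) (hi : (i : ℕ) + 1 < n), b ⟨(i : ℕ) + 1, hi⟩ ≤ 1 + (Finset.Iic i).sup b)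

/-! Label each class of an equivalence relation on a linear order by the number of classes whose
least element comes earlier. These canonical labellings are exactly the functions `b` with
`b i ≤ #{b j | j < i}`, and such a `b` is recovered from its kernel: a value of `b` is new
exactly when it equals the number of earlier values. On `Fin n` this growth condition is the
restricted growth condition, because the earlier values always form an initial segment of `ℕ`. -/

open Finset

theorem Finset.card_image_le_of_ker_le {α β γ : Type*} [DecidableEq β] [DecidableEq γ]
    {f : α → β} {g : α → γ} (h : Setoid.ker f ≤ Setoid.ker g) (s : Finset α) :
    #(s.image g) ≤ #(s.image f) := by
  refine card_le_card_of_forall_subsingleton (fun c b => ∃ x ∈ s, g x = c ∧ f x = b) ?_ ?_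
  · intro c hc
    obtain ⟨x, hx, rfl⟩ := mem_image.1 hc
    exact ⟨f x, mem_image_of_mem f hx, x, hx, rfl, rfl⟩
  · rintro b - c ⟨-, x, -, rfl, rfl⟩ c' ⟨-, y, -, rfl, hyx⟩
    exact h hyx.symm

theorem Finset.card_image_eq_of_ker_eq {α β γ : Type*} [DecidableEq β] [DecidableEq γ]
    {f : α → β} {g : α → γ} (h : Setoid.ker f = Setoid.ker g) (s : Finset α) :
    #(s.image f) = #(s.image g) :=
  le_antisymm (card_image_le_of_ker_le h.ge s) (card_image_le_of_ker_le h.le s)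

variable {α : Type*} [LinearOrder α] [LocallyFiniteOrderBot α]

namespace Setoid

section classMin

open Classical

variable (s : Setoid α)

noncomputable def classMin (i : α) : α :=
  ((Iic i).filter (s · i)).min' ⟨i, by simp⟩

variable {s}

theorem classMin_mem_filter (i : α) : s.classMin i ∈ (Iic i).filter (s · i) :=
  min'_mem _ _

theorem classMin_rel (i : α) : s (s.classMin i) i :=
  (mem_filter.1 (classMin_mem_filter i)).2

theorem classMin_le_self (i : α) : s.classMin i ≤ i :=
  mem_Iic.1 (mem_filter.1 (classMin_mem_filter i)).1

theorem classMin_le_of_rel {i j : α} (h : s j i) : s.classMin i ≤ j := by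
  rcases le_total j i with hji | hij
  · exact min'_le _ _ (mem_filter.2 ⟨mem_Iic.2 hji, h⟩)
  · exact (classMin_le_self i).trans hij

end classMin

variable {s : Setoid α}

theorem classMin_eq_classMin_iff {i j : α} : s.classMin i = s.classMin j ↔ s i j := by
  refine ⟨fun h => s.trans' (s.symm' (classMin_rel i)) (h ▸ classMin_rel j), fun h => ?_⟩
  exact le_antisymm
    (classMin_le_of_rel (s.trans' (classMin_rel j) (s.symm' h)))
    (classMin_le_of_rel (s.trans' (classMin_rel i) h))

theorem ker_classMin : ker s.classMin = s :=
  ext fun _ _ => classMin_eq_classMin_iff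

variable (s) in
noncomputable def canonicalLabel (i : α) : ℕ :=
  #((Iio (s.classMin i)).image s.classMin)

theorem canonicalLabel_lt_of_classMin_lt {i j : α} (h : s.classMin i < s.classMin j) :
    s.canonicalLabel i < s.canonicalLabel j := by
  refine card_lt_card ⟨image_subset_image (Iio_subset_Iio h.le), fun hsub => ?_⟩
  have hmem : s.classMin i ∈ (Iio (s.classMin j)).image s.classMin :=
    mem_image.2 ⟨s.classMin i, mem_Iio.2 h, classMin_eq_classMin_iff.2 (classMin_rel i)⟩
  obtain ⟨k, hk, hki⟩ := mem_image.1 (hsub hmem)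
  exact ((classMin_le_self k).trans_lt (mem_Iio.1 hk)).ne hki

theorem ker_canonicalLabel : ker s.canonicalLabel = s := by
  refine ext fun i j => ⟨fun h => ?_, fun h => ?_⟩
  · rcases lt_trichotomy (s.classMin i) (s.classMin j) with hlt | heq | hgt
    · exact absurd h (canonicalLabel_lt_of_classMin_lt hlt).ne
    · exact classMin_eq_classMin_iff.1 heq
    · exact absurd h (canonicalLabel_lt_of_classMin_lt hgt).ne'
  · simp only [ker_def, canonicalLabel, classMin_eq_classMin_iff.2 h]

end Setoid

def IsRestrictedGrowth (b : α → ℕ) : Prop :=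
  ∀ i, b i ≤ #((Iio i).image b)

theorem image_Iio_subset_range_card {b : α → ℕ} {i : α}
    (hb : ∀ j < i, b j ≤ #((Iio j).image b)) :
    (Iio i).image b ⊆ range #((Iio i).image b) := by
  intro v hv
  rw [mem_range]
  have hne : ((Iio i).filter (b · = v)).Nonempty := by simpa [Finset.Nonempty] using hv
  set k := ((Iio i).filter (b · = v)).min' hne
  obtain ⟨hki, hkv⟩ := mem_filter.1 (min'_mem _ hne)
  have hfresh : v ∉ (Iio k).image b := fun hvk => by
    obtain ⟨j, hjk, hjv⟩ := mem_image.1 hvk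
    exact not_le_of_gt (mem_Iio.1 hjk)
      (min'_le _ _ (mem_filter.2 ⟨mem_Iio.2 ((mem_Iio.1 hjk).trans (mem_Iio.1 hki)), hjv⟩))
  have hsub : insert v ((Iio k).image b) ⊆ (Iio i).image b :=
    insert_subset hv (image_subset_image (Iio_subset_Iio (mem_Iio.1 hki).le))
  calc v = b k := hkv.symm
    _ ≤ #((Iio k).image b) := hb k (mem_Iio.1 hki)
    _ < #(insert v ((Iio k).image b)) := by rw [card_insert_of_notMem hfresh]; omega
    _ ≤ #((Iio i).image b) := card_le_card hsub

namespace IsRestrictedGrowth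

variable {b : α → ℕ}

theorem image_Iio_eq_range_card (hb : IsRestrictedGrowth b) (i : α) :
    (Iio i).image b = range #((Iio i).image b) :=
  eq_of_subset_of_card_le (image_Iio_subset_range_card fun j _ => hb j) (card_range _).le

theorem eq_card_of_notMem {i : α} (hb : IsRestrictedGrowth b) (hi : b i ∉ (Iio i).image b) :
    b i = #((Iio i).image b) := by
  refine (hb i).antisymm (not_lt.1 fun hlt => hi ?_)
  rw [hb.image_Iio_eq_range_card i]
  exact mem_range.2 hlt

theorem canonicalLabel_ker (hb : IsRestrictedGrowth b) : (Setoid.ker b).canonicalLabel = b := by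
  funext i
  set k := (Setoid.ker b).classMin i
  have hki : b k = b i := Setoid.classMin_rel (s := Setoid.ker b) i
  have hfresh : b k ∉ (Iio k).image b := fun hk => by
    obtain ⟨j, hjk, hj⟩ := mem_image.1 hk
    exact not_le_of_gt (mem_Iio.1 hjk)
      (Setoid.classMin_le_of_rel (hj.trans hki))
  calc (Setoid.ker b).canonicalLabel i = #((Iio k).image b) :=
        card_image_eq_of_ker_eq Setoid.ker_classMin _
    _ = b k := (hb.eq_card_of_notMem hfresh).symm
    _ = b i := hki

end IsRestrictedGrowth

theorem Setoid.isRestrictedGrowth_canonicalLabel (s : Setoid α) :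
    IsRestrictedGrowth s.canonicalLabel := fun i =>
  calc s.canonicalLabel i = #((Iio (s.classMin i)).image s.canonicalLabel) :=
        card_image_eq_of_ker_eq (ker_classMin.trans ker_canonicalLabel.symm) _
    _ ≤ #((Iio i).image s.canonicalLabel) :=
        card_le_card (image_subset_image (Iio_subset_Iio (classMin_le_self i)))

noncomputable def Setoid.equivRestrictedGrowth :
    Setoid α ≃ {b : α → ℕ // IsRestrictedGrowth b} where
  toFun s := ⟨s.canonicalLabel, s.isRestrictedGrowth_canonicalLabel⟩
  invFun b := ker b.1
  left_inv _ := ker_canonicalLabel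
  right_inv b := Subtype.ext b.2.canonicalLabel_ker

theorem Fin.Iio_mk_succ_eq_Iic {n : ℕ} (i : Fin n) (hi : (i : ℕ) + 1 < n) :
    Iio (⟨i + 1, hi⟩ : Fin n) = Iic i := by
  ext j
  simp only [mem_Iio, mem_Iic, Fin.lt_def, Fin.le_def]
  omega

theorem IsRGS.isRestrictedGrowth {n : ℕ} {b : Fin n → ℕ} (hb : IsRGS n b) :
    IsRestrictedGrowth b := by
  intro i
  induction i using WellFoundedLT.induction with
  | _ i ih =>
  obtain ⟨_ | k, hk⟩ := i
  · simp [hb.1 ⟨0, hk⟩ rfl]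
  · have hsub := image_Iio_subset_range_card ih
    rw [Fin.Iio_mk_succ_eq_Iic ⟨k, by omega⟩ hk] at hsub ⊢
    have hsup : (Iic (⟨k, by omega⟩ : Fin n)).sup b < #((Iic ⟨k, by omega⟩).image b) :=
      (Finset.sup_lt_iff (by simp)).2 fun j hj => mem_range.1 (hsub (mem_image_of_mem b hj))
    exact (hb.2 ⟨k, by omega⟩ hk).trans (by omega)

theorem IsRestrictedGrowth.isRGS {n : ℕ} {b : Fin n → ℕ} (hb : IsRestrictedGrowth b) :
    IsRGS n b := by
  refine ⟨fun i hi => ?_, fun i hi => ?_⟩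
  · have hempty : Iio i = ∅ := by
      ext j
      simp only [mem_Iio, Fin.lt_def, hi, Finset.notMem_empty, iff_false]
      omega
    simpa [hempty] using hb i
  · calc b ⟨i + 1, hi⟩ ≤ #((Iic i).image b) := Fin.Iio_mk_succ_eq_Iic i hi ▸ hb _
      _ ≤ #(range ((Iic i).sup b + 1)) := by
        refine card_le_card ?_
        simpa [sup_image] using subset_range_sup_succ ((Iic i).image b)
      _ = 1 + (Iic i).sup b := by rw [card_range, add_comm]

theorem rgs_count_eq_bell_general (n : ℕ) :
    Nat.card {b : Fin n → ℕ // IsRGS n b} = Nat.card (Setoid (Fin n)) := by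
  rw [Nat.card_congr (Equiv.subtypeEquivRight fun _ => ⟨IsRGS.isRestrictedGrowth,
      IsRestrictedGrowth.isRGS⟩),
    Nat.card_congr Setoid.equivRestrictedGrowth]

/-- For every positive `n`, the number of restricted growth strings of length `n` equals
the number of partitions of an `n`-element set (equivalence relations on `Fin n`). -/
theorem rgs_count_eq_bell (n : ℕ) (hn : 0 < n) :
    Nat.card {b : Fin n → ℕ // IsRGS n b} = Nat.card (Setoid (Fin n)) :=
  rgs_count_eq_bell_general n
end

section
/- Let G and G' be finite simple graphs, let v be a vertex of G and v' a vertex of G', and let r be a natural number. Let B_r(v) denote the subgraph of G induced on the set of vertices joined to v by a path of length at most r, with m its number of edges, and define B_r(v') ⊆ G' and m' analogously. If for every l with 1 ≤ l ≤ 2(max(m, m') + 1) the set of anonymous walks of walks of length l in G starting at v equals the set of anonymous walks of walks of length l in G' starting at v', then there exists a graph isomorphism from B_r(v) onto B_r(v') mapping v to v'. -/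
/-! A closed walk from `v` through every edge of `B_r(v)` has length at most `2m`. Its anonymous
walk is realised by a walk from `v'` in `G'`, and since an anonymous walk records exactly which
positions visit the same vertex, reading the two walks in parallel gives an injective
homomorphism `B_r(v) → B_r(v')` fixing the roots (homomorphisms preserve the radius bound).
By symmetry there is also one backwards, so the balls have equally many vertices and edges, and
the first homomorphism is then an isomorphism. -/

/-- The first index at which the value `g i` occurs in `g`. -/
def firstOcc {n : ℕ} {α : Type*} [DecidableEq α] (g : Fin n → α) (i : Fin n) : Fin n :=
  (Finset.univ.filter fun j => g j = g i).min' ⟨i, by simp⟩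

/-- The anonymization of `g` at `i`: the number of distinct values of `g` occurring
strictly before the first occurrence of `g i`. -/
def anonymize {n : ℕ} {α : Type*} [DecidableEq α] (g : Fin n → α) (i : Fin n) : ℕ :=
  ((Finset.univ.filter fun j => j < firstOcc g i).image g).card

/-- The set of vertices joined to `v` by a path (equivalently, a walk) of length at most `r`. -/
def ball {V : Type*} (G : SimpleGraph V) (v : V) (r : ℕ) : Set V :=
  {u | ∃ w : G.Walk v u, w.length ≤ r}

/-- The set of anonymous walks of walks of length `l` in `G` starting at `v`. -/
def AWset {V : Type*} [DecidableEq V] (G : SimpleGraph V) (v : V) (l : ℕ) :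
    Set (Fin (l + 1) → ℕ) :=
  {a | ∃ w : Fin (l + 1) → V, w 0 = v ∧ (∀ i : Fin l, G.Adj (w i.castSucc) (w i.succ)) ∧
    ∀ i, a i = anonymize w i}

section Anonymize

variable {n : ℕ} {α β : Type*} [DecidableEq α] [DecidableEq β] {g : Fin n → α} {i j : Fin n}

lemma apply_firstOcc (g : Fin n → α) (i : Fin n) : g (firstOcc g i) = g i :=
  (Finset.mem_filter.mp ((Finset.univ.filter fun j => g j = g i).min'_mem _)).2

lemma firstOcc_le (h : g j = g i) : firstOcc g i ≤ j :=
  Finset.min'_le _ _ (by simp [h])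

lemma firstOcc_congr (h : g i = g j) : firstOcc g i = firstOcc g j :=
  le_antisymm (firstOcc_le (by rw [apply_firstOcc g j, h]))
    (firstOcc_le (by rw [apply_firstOcc g i, h]))

lemma anonymize_lt_anonymize (h : firstOcc g i < firstOcc g j) :
    anonymize g i < anonymize g j := by
  refine Finset.card_lt_card ((Finset.ssubset_iff_of_subset ?_).2 ⟨g i, ?_, ?_⟩)
  · refine Finset.image_subset_image fun k hk => ?_
    simp only [Finset.mem_filter, Finset.mem_univ, true_and] at hk ⊢
    exact hk.trans h
  · exact Finset.mem_image.2 ⟨firstOcc g i, by simpa using h, apply_firstOcc g i⟩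
  · simp only [Finset.mem_image, Finset.mem_filter, Finset.mem_univ, true_and, not_exists,
      not_and]
    exact fun k hk hgk => (firstOcc_le hgk).not_gt hk

lemma anonymize_eq_anonymize_iff : anonymize g i = anonymize g j ↔ g i = g j := by
  refine ⟨fun h => ?_, fun h => by rw [anonymize, anonymize, firstOcc_congr h]⟩
  by_contra hne
  have hocc : firstOcc g i ≠ firstOcc g j := fun hocc =>
    hne (by rw [← apply_firstOcc g i, hocc, apply_firstOcc g j])
  rcases hocc.lt_or_gt with hlt | hlt
  · exact (anonymize_lt_anonymize hlt).ne h
  · exact (anonymize_lt_anonymize hlt).ne' h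

lemma anonymize_zero (g : Fin (n + 1) → α) : anonymize g 0 = 0 := by
  have : firstOcc g 0 = 0 := Fin.le_zero_iff.1 (firstOcc_le rfl)
  simp [anonymize, this]

lemma exists_injOn_comp_eq_of_anonymize_eq [Nonempty β] {g' : Fin n → β}
    (h : anonymize g = anonymize g') :
    ∃ φ : α → β, Set.InjOn φ (Set.range g) ∧ φ ∘ g = g' := by
  have hiff : ∀ i j, g i = g j ↔ g' i = g' j := fun i j => by
    rw [← anonymize_eq_anonymize_iff (g := g), ← anonymize_eq_anonymize_iff (g := g'), h]
  have hfac : g'.FactorsThrough g := fun i j hij => (hiff i j).1 hij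
  refine ⟨Function.extend g g' fun _ => Classical.arbitrary β, ?_,
    funext (hfac.extend_apply _)⟩
  rintro _ ⟨i, rfl⟩ _ ⟨j, rfl⟩ hij
  rw [hfac.extend_apply, hfac.extend_apply] at hij
  exact (hiff i j).2 hij

end Anonymize

lemma AWset_zero {V : Type*} [DecidableEq V] (G : SimpleGraph V) (v : V) :
    AWset G v 0 = {0} := by
  ext a
  refine ⟨fun ⟨w, _, _, ha⟩ => funext fun i => ?_, fun ha => ⟨fun _ => v, rfl, Fin.elim0,
    fun i => ?_⟩⟩
  · rw [Fin.fin_one_eq_zero i, ha, anonymize_zero]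
    rfl
  · rw [Set.mem_singleton_iff.1 ha, Fin.fin_one_eq_zero i, anonymize_zero]
    rfl

namespace SimpleGraph

namespace Walk

variable {W : Type*} {H : SimpleGraph W} {x y z a b : W}

lemma exists_adj_mem_support_notMem_edgeSet (w : H.Walk x y) (p : H.Walk x z)
    (hz : z ∉ w.support) : ∃ a b, H.Adj a b ∧ a ∈ w.support ∧ s(a, b) ∉ w.edgeSet := by
  obtain ⟨d, -, hd₁, hd₂⟩ := p.exists_boundary_dart {u | u ∈ w.support} w.start_mem_support hz
  exact ⟨d.fst, d.snd, d.adj, hd₁, fun hd => hd₂ (w.snd_mem_support_of_mem_edges hd)⟩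

lemma mem_support_of_edgeSet_subset (w : H.Walk x y) (hw : H.edgeSet ⊆ w.edgeSet)
    (hz : H.Reachable x z) : z ∈ w.support := by
  by_contra hz'
  obtain ⟨a, b, hab, -, hnot⟩ := w.exists_adj_mem_support_notMem_edgeSet hz.some hz'
  exact hnot (hw hab)

/-- Insert the detour `a → b → a` at a visit of `a`. -/
lemma exists_length_eq_add_two_edgeSet_eq_insert (w : H.Walk x y) (ha : a ∈ w.support)
    (hab : H.Adj a b) :
    ∃ w' : H.Walk x y, w'.length = w.length + 2 ∧ w'.edgeSet = insert s(a, b) w.edgeSet := by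
  obtain ⟨q, r, rfl⟩ := mem_support_iff_exists_append.1 ha
  refine ⟨q.append (cons hab (cons hab.symm r)), by simp only [length_append, length_cons]; omega,
    ?_⟩
  simp only [edgeSet_append, edgeSet_cons, Sym2.eq_swap (a := b)]
  ext e
  simp only [Set.mem_union, Set.mem_insert_iff]
  tauto

/-- Repeatedly add a detour along an untraversed edge at a visited vertex, which exists by
connectivity while some edge is missing; each detour costs two steps and gains one edge. -/
theorem exists_edgeSet_eq_of_length_le [Finite W] (hR : ∀ z, H.Reachable x z) (w : H.Walk x x)
    (hw : w.length ≤ 2 * w.edgeSet.ncard) :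
    ∃ w' : H.Walk x x, w'.edgeSet = H.edgeSet ∧ w'.length ≤ 2 * H.edgeSet.ncard := by
  have hsub : ∀ w : H.Walk x x, w.edgeSet ⊆ H.edgeSet := fun w => w.edges_subset_edgeSet
  by_cases hcov : H.edgeSet ⊆ w.edgeSet
  · exact ⟨w, (hsub w).antisymm hcov,
      hw.trans (Nat.mul_le_mul_left 2 (Set.ncard_le_ncard (hsub w)))⟩
  obtain ⟨e, he, hew⟩ := Set.not_subset.1 hcov
  obtain ⟨a, b, hab, ha, hnot⟩ : ∃ a b, H.Adj a b ∧ a ∈ w.support ∧ s(a, b) ∉ w.edgeSet := by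
    induction e using Sym2.ind with | h a b => ?_
    by_cases ha : a ∈ w.support
    · exact ⟨a, b, he, ha, hew⟩
    · exact w.exists_adj_mem_support_notMem_edgeSet (hR a).some ha
  obtain ⟨w', hlen, hedges⟩ := w.exists_length_eq_add_two_edgeSet_eq_insert ha hab
  have hcard : w'.edgeSet.ncard = w.edgeSet.ncard + 1 := by
    rw [hedges, Set.ncard_insert_of_notMem hnot]
  have : w'.edgeSet.ncard ≤ H.edgeSet.ncard := Set.ncard_le_ncard (hsub w')
  exact exists_edgeSet_eq_of_length_le hR w' (by omega)
termination_by H.edgeSet.ncard - w.edgeSet.ncard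

end Walk

/-- A bijective homomorphism need not reflect adjacency; equality of the edge counts forces it. -/
lemma Copy.exists_iso_coe_eq {α β : Type*} [Finite α] [Finite β] {A : SimpleGraph α}
    {B : SimpleGraph β} (f : Copy A B) (g : Copy B A) : ∃ e : A ≃g B, ⇑e = ⇑f := by
  have hf : Function.Bijective f :=
    f.injective.bijective_of_nat_card_le (Nat.card_le_card_of_injective g g.injective)
  have hE : Function.Surjective f.mapEdgeSet :=
    (f.mapEdgeSet.injective.bijective_of_nat_card_le
      (Nat.card_le_card_of_injective _ g.mapEdgeSet.injective)).2
  refine ⟨⟨Equiv.ofBijective f hf, fun {a b} => ⟨fun hab => ?_, f.toHom.map_adj⟩⟩, rfl⟩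
  obtain ⟨⟨e, he⟩, hfe⟩ := hE ⟨s(f a, f b), hab⟩
  have : e = s(a, b) := Sym2.map.injective f.injective (congrArg Subtype.val hfe)
  exact (mem_edgeSet A).1 (this ▸ he)

end SimpleGraph

section Ball

variable {V V' : Type*} {G : SimpleGraph V} {G' : SimpleGraph V'} {v : V} {v' : V'} {r : ℕ}

lemma self_mem_ball : v ∈ ball G v r := ⟨.nil, Nat.zero_le r⟩

lemma support_subset_ball {u : V} (p : G.Walk v u) (hp : p.length ≤ r) :
    ∀ x ∈ p.support, x ∈ ball G v r := by
  classical
  exact fun x hx => ⟨p.takeUntil x hx, (p.length_takeUntil_le_length hx).trans hp⟩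

lemma exists_walk_induce_ball {u : V} (hu : u ∈ ball G v r) :
    ∃ p : (G.induce (ball G v r)).Walk ⟨v, self_mem_ball⟩ ⟨u, hu⟩, p.length ≤ r := by
  obtain ⟨p, hp⟩ := hu
  refine ⟨p.induce _ (support_subset_ball p hp), ?_⟩
  rwa [← SimpleGraph.Walk.length_map (SimpleGraph.Embedding.induce _).toHom,
    SimpleGraph.Walk.map_induce]

lemma exists_copy_ball_of_injective (f : G.induce (ball G v r) →g G') (hf : Function.Injective f)
    (hv : f ⟨v, self_mem_ball⟩ = v') :
    ∃ f' : SimpleGraph.Copy (G.induce (ball G v r)) (G'.induce (ball G' v' r)),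
      ∀ x, (f' x : V') = f x := by
  subst hv
  have hball (x : ball G v r) : f x ∈ ball G' (f ⟨v, self_mem_ball⟩) r := by
    obtain ⟨p, hp⟩ := exists_walk_induce_ball x.2
    exact ⟨p.map f, by rwa [SimpleGraph.Walk.length_map]⟩
  exact ⟨⟨⟨fun x => ⟨f x, hball x⟩, fun hxy => f.map_adj hxy⟩,
    fun x y hxy => hf (congrArg Subtype.val hxy)⟩, fun _ => rfl⟩

theorem exists_copy_ball_of_AWset_subset [Finite V] [DecidableEq V] [DecidableEq V']
    (h : ∀ l ≤ 2 * Nat.card (G.induce (ball G v r)).edgeSet, AWset G v l ⊆ AWset G' v' l) :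
    ∃ f : SimpleGraph.Copy (G.induce (ball G v r)) (G'.induce (ball G' v' r)),
      (f ⟨v, self_mem_ball⟩ : V') = v' := by
  set B := G.induce (ball G v r)
  have hreach (u : ball G v r) : B.Reachable ⟨v, self_mem_ball⟩ u :=
    (exists_walk_induce_ball u.2).elim fun p _ => ⟨p⟩
  obtain ⟨w, hwE, hwl⟩ := SimpleGraph.Walk.exists_edgeSet_eq_of_length_le hreach .nil (by simp)
  set g : Fin (w.length + 1) → V := fun i => (w.getVert i).1
  obtain ⟨g', hg'0, hg'adj, hg'⟩ := h w.length (by rwa [Nat.card_coe_set_eq])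
    ⟨g, by simp [g], fun i => w.adj_getVert_succ i.2, fun _ => rfl⟩
  have : Nonempty V' := ⟨v'⟩
  obtain ⟨φ, hφinj, hφg⟩ := exists_injOn_comp_eq_of_anonymize_eq (funext hg')
  have hrange (u : ball G v r) : u.1 ∈ Set.range g := by
    obtain ⟨i, rfl, hi⟩ := SimpleGraph.Walk.mem_support_iff_exists_getVert.1
      (w.mem_support_of_edgeSet_subset hwE.ge (hreach u))
    exact ⟨⟨i, by omega⟩, rfl⟩
  have hadj (x y : ball G v r) (hxy : B.Adj x y) : G'.Adj (φ x) (φ y) := by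
    obtain ⟨i, hi, hxy'⟩ := w.mk_mem_edges_iff_exists.1 (hwE.ge hxy)
    have hstep : G'.Adj (φ (g ⟨i, by omega⟩)) (φ (g ⟨i + 1, by omega⟩)) := by
      simpa [← hφg] using hg'adj ⟨i, hi⟩
    rcases Sym2.eq_iff.1 hxy' with ⟨rfl, rfl⟩ | ⟨rfl, rfl⟩
    exacts [hstep, hstep.symm]
  have hφv : φ v = v' := by simpa [g, ← hφg] using hg'0
  obtain ⟨f, hf⟩ := exists_copy_ball_of_injective (G' := G') ⟨fun x => φ x, hadj _ _⟩
    (fun x y hxy => Subtype.ext (hφinj (hrange x) (hrange y) hxy)) hφv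
  exact ⟨f, (hf _).trans hφv⟩

end Ball

/-- If two finite rooted graphs `(G, v)` and `(G', v')` have the same sets of anonymous walks
of every length `l` with `1 ≤ l ≤ 2(max(m, m') + 1)`, where `m` (resp. `m'`) is the number of
edges of the ball `B_r(v)` (resp. `B_r(v')`), then `B_r(v)` and `B_r(v')` are isomorphic via
an isomorphism mapping `v` to `v'`. -/
theorem aw_reconstruct_ball {V V' : Type*} [Fintype V] [Fintype V']
    [DecidableEq V] [DecidableEq V']
    (G : SimpleGraph V) (G' : SimpleGraph V') (v : V) (v' : V') (r : ℕ)
    (h : ∀ l : ℕ, 1 ≤ l →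
      l ≤ 2 * (max (Nat.card (SimpleGraph.induce (ball G v r) G).edgeSet)
                   (Nat.card (SimpleGraph.induce (ball G' v' r) G').edgeSet) + 1) →
      AWset G v l = AWset G' v' l) :
    ∃ σ : SimpleGraph.induce (ball G v r) G ≃g SimpleGraph.induce (ball G' v' r) G',
      (σ ⟨v, ⟨SimpleGraph.Walk.nil, Nat.zero_le r⟩⟩ : V') = v' := by
  have hAW (l : ℕ) (hl : l ≤ 2 * max (Nat.card (G.induce (ball G v r)).edgeSet)
      (Nat.card (G'.induce (ball G' v' r)).edgeSet)) : AWset G v l = AWset G' v' l := by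
    rcases l.eq_zero_or_pos with rfl | hl₀
    · rw [AWset_zero, AWset_zero]
    · exact h l hl₀ (by omega)
  obtain ⟨f, hf⟩ := exists_copy_ball_of_AWset_subset fun l hl =>
    (hAW l (hl.trans (by gcongr; exact le_max_left _ _))).subset
  obtain ⟨g, -⟩ := exists_copy_ball_of_AWset_subset fun l hl =>
    (hAW l (hl.trans (by gcongr; exact le_max_right _ _))).symm.subset
  obtain ⟨σ, hσ⟩ := f.exists_iso_coe_eq g
  exact ⟨σ, by rw [hσ]; exact hf⟩
end
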